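/- Let G be the group with presentation ⟨a, b, c ∣ a² = b² = c² = (abc)² = 1⟩ and let G⁰ be the kernel of the length-parity homomorphism G → ℤ/2ℤ. Then G⁰ is a normal subgroup of G of index 2, so G/G⁰ ≅ ℤ/2ℤ; in particular G is virtually commutative (it has a commutative normal subgroup of finite index). -/

import Mathlib

open FreeGroup

/-- Relators of the group `⟨a, b, c ∣ a² = b² = c² = (abc)² = 1⟩`. -/
def P6rels : Set (FreeGroup (Fin 3)) :=
  {(of 0) ^ 2, (of 1) ^ 2, (of 2) ^ 2, (of 0 * of 1 * of 2) ^ 2}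

/-- The group `G = ⟨a, b, c ∣ a² = b² = c² = (abc)² = 1⟩`. -/
abbrev P6G := PresentedGroup P6rels

/-- The parity homomorphism `G → ℤ/2ℤ` sending each generator to `1`. -/
def parity : P6G →* Multiplicative (ZMod 2) :=
  PresentedGroup.toGroup (f := fun _ => Multiplicative.ofAdd (1 : ZMod 2)) (by
    intro r hr
    rcases hr with rfl | rfl | rfl | rfl <;>
      simp [map_pow, map_mul] <;> decide)

/-!
The kernel of the parity map is the subgroup `H` generated by `u = ab` and `v = bc`, and these
commute: `vu = bcab = a⁻¹ (abc)² c⁻¹ = ac = uv`. Every `g` satisfies `g ∈ H` or `ag ∈ H`, because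
left multiplication by a generator `s` swaps the two conditions (`as ∈ H` for `s = a, b, c`);
as `a` is odd, the even elements are exactly those of `H`.
-/

section

variable {G : Type*} [Group G]

theorem Subgroup.mem_or_mul_mem_of_mem_closure {S : Set G} {H : Subgroup G} {a : G}
    (hS : ∀ s ∈ S, a * s ∈ H ∧ a * s⁻¹ ∈ H) {g : G} (hg : g ∈ Subgroup.closure S) :
    g ∈ H ∨ a * g ∈ H := by
  have step : ∀ t g : G, a * t ∈ H → a * t⁻¹ ∈ H → g ∈ H ∨ a * g ∈ H →
      t * g ∈ H ∨ a * (t * g) ∈ H := by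
    rintro t g ht ht' (hg | hg)
    · exact Or.inr (by rw [← mul_assoc]; exact mul_mem ht hg)
    · refine Or.inl ?_
      have : t * g = (a * t⁻¹)⁻¹ * (a * g) := by group
      rw [this]
      exact mul_mem (inv_mem ht') hg
  induction hg using Subgroup.closure_induction_left with
  | one => exact Or.inl (one_mem H)
  | mul_left s hs g _ ih => exact step s g (hS s hs).1 (hS s hs).2 ih
  | inv_mul_cancel s hs g _ ih =>
    exact step s⁻¹ g (hS s hs).2 (by rw [inv_inv]; exact (hS s hs).1) ih

theorem MonoidHom.ker_eq_of_mem_or_mul_mem {M : Type*} [Group M] {φ : G →* M} {H : Subgroup G}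
    {a : G} (hH : H ≤ φ.ker) (ha : φ a ≠ 1) (h : ∀ g, g ∈ H ∨ a * g ∈ H) : φ.ker = H := by
  refine le_antisymm (fun g hg => (h g).resolve_right fun hag => ha ?_) hH
  have hag : φ (a * g) = 1 := hH hag
  rwa [_root_.map_mul, MonoidHom.mem_ker.mp hg, mul_one] at hag

theorem commute_mul_mul_of_sq_eq_one {a b c : G} (ha : a ^ 2 = 1) (hb : b ^ 2 = 1)
    (hc : c ^ 2 = 1) (habc : (a * b * c) ^ 2 = 1) : Commute (a * b) (b * c) := by
  have ha' : a⁻¹ = a := inv_eq_of_mul_eq_one_right (by rwa [← sq])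
  have hc' : c⁻¹ = c := inv_eq_of_mul_eq_one_right (by rwa [← sq])
  calc a * b * (b * c) = a * b ^ 2 * c := by rw [sq]; group
    _ = a⁻¹ * (a * b * c) ^ 2 * c⁻¹ := by rw [hb, habc, ha', hc']
    _ = b * c * (a * b) := by rw [sq]; group

end

namespace P6G

abbrev a : P6G := PresentedGroup.of 0
abbrev b : P6G := PresentedGroup.of 1
abbrev c : P6G := PresentedGroup.of 2

theorem of_sq (i : Fin 3) : (PresentedGroup.of i : P6G) ^ 2 = 1 :=
  PresentedGroup.one_of_mem (x := of i ^ 2) (by fin_cases i <;> simp [P6rels])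

theorem a_mul_b_mul_c_sq : (a * b * c) ^ 2 = 1 :=
  PresentedGroup.one_of_mem (x := (of 0 * of 1 * of 2) ^ 2) (by simp [P6rels])

theorem of_inv (i : Fin 3) : (PresentedGroup.of i : P6G)⁻¹ = PresentedGroup.of i :=
  inv_eq_of_mul_eq_one_right (by rw [← sq, of_sq])

theorem parity_of (i : Fin 3) : parity (PresentedGroup.of i) = Multiplicative.ofAdd 1 :=
  PresentedGroup.toGroup.of _

theorem parity_surjective : Function.Surjective parity := by
  intro y
  rcases (by decide : ∀ y : Multiplicative (ZMod 2), y = 1 ∨ y = .ofAdd 1) y with rfl | rfl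
  · exact ⟨1, map_one parity⟩
  · exact ⟨a, parity_of 0⟩

theorem ker_parity : parity.ker = Subgroup.closure {a * b, b * c} := by
  refine parity.ker_eq_of_mem_or_mul_mem (a := a) ?_ (by rw [parity_of]; decide) fun g => ?_
  · rw [Subgroup.closure_le]
    rintro _ (rfl | rfl) <;>
      rw [SetLike.mem_coe, MonoidHom.mem_ker, _root_.map_mul, parity_of, parity_of] <;> decide
  refine Subgroup.mem_or_mul_mem_of_mem_closure ?_
    (by rw [PresentedGroup.closure_range_of]; exact Subgroup.mem_top g)
  rintro _ ⟨i, rfl⟩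
  rw [of_inv, and_self]
  fin_cases i
  · exact (show a * a = 1 by rw [← sq, of_sq]) ▸ one_mem _
  · exact Subgroup.subset_closure (by simp)
  · have hac : a * c = a * b * (b * c) := by rw [mul_assoc, ← mul_assoc b, ← sq, of_sq, one_mul]
    exact hac ▸ mul_mem (Subgroup.subset_closure (by simp)) (Subgroup.subset_closure (by simp))

theorem ker_parity_mul_comm : ∀ x ∈ parity.ker, ∀ y ∈ parity.ker, x * y = y * x := by
  have hab_bc : Commute (a * b) (b * c) :=
    commute_mul_mul_of_sq_eq_one (of_sq 0) (of_sq 1) (of_sq 2) a_mul_b_mul_c_sq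
  have hgens : ∀ x ∈ ({a * b, b * c} : Set P6G), ∀ y ∈ ({a * b, b * c} : Set P6G),
      x * y = y * x := by
    rintro _ (rfl | rfl) _ (rfl | rfl)
    exacts [rfl, hab_bc.eq, hab_bc.symm.eq, rfl]
  rw [ker_parity]
  intro x hx y hy
  exact Set.centralizer_centralizer_comm_of_comm hgens _
    (Subgroup.closure_le_centralizer_centralizer _ hx) _
    (Subgroup.closure_le_centralizer_centralizer _ hy)

end P6G

/-- `G⁰ = ker(parity)` is a normal subgroup of index 2 with `G/G⁰ ≅ ℤ/2ℤ`;
in particular `G` is virtually commutative: it has a commutative normal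
subgroup of finite index. -/
theorem P6G_virtually_commutative :
    parity.ker.Normal ∧ parity.ker.index = 2 ∧
      Nonempty (P6G ⧸ parity.ker ≃* Multiplicative (ZMod 2)) ∧
      ∃ N : Subgroup P6G, N = parity.ker ∧ N.Normal ∧
        (∀ x ∈ N, ∀ y ∈ N, x * y = y * x) ∧ N.FiniteIndex := by
  have hindex : parity.ker.index = 2 := by
    rw [Subgroup.index_ker, MonoidHom.range_eq_top.mpr P6G.parity_surjective, Subgroup.card_top,
      Nat.card_eq_fintype_card, Fintype.card_multiplicative, ZMod.card]
  exact ⟨inferInstance, hindex,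
    ⟨QuotientGroup.quotientKerEquivOfSurjective parity P6G.parity_surjective⟩,
    parity.ker, rfl, inferInstance, P6G.ker_parity_mul_comm, ⟨by rw [hindex]; exact two_ne_zero⟩⟩
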